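/- Let n ≥ 1, let G be a discrete subgroup of PU(1,n), and let (γ_m) be a sequence of pairwise distinct elements of G converging, in the sense of quasi-projective transformations, to a quasi-projective map γ. Then the unique point of Ker(γ) ∩ ∂𝐇ⁿ_ℂ belongs to the Chen–Greenberg limit set Λ_CG(G). -/

import Mathlib

open Filter Topology Matrix

noncomputable section

abbrev Vec (n : ℕ) := Fin (n + 1) → ℂ
abbrev Mat (n : ℕ) := Matrix (Fin (n + 1)) (Fin (n + 1)) ℂ
abbrev Pn (n : ℕ) := Projectivization ℂ (Vec n)

instance (n : ℕ) : TopologicalSpace (Pn n) :=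
  inferInstanceAs (TopologicalSpace (Quotient (projectivizationSetoid ℂ (Vec n))))

def herm (n : ℕ) (u v : Vec n) : ℂ :=
  -(u 0 * (starRingEnd ℂ) (v 0)) + ∑ j : Fin n, u j.succ * (starRingEnd ℂ) (v j.succ)

def Hball (n : ℕ) : Set (Pn n) :=
  {p | ∃ v : Vec n, ∃ hv : v ≠ 0, p = Projectivization.mk ℂ v hv ∧ (herm n v v).re < 0}

def Hbdry (n : ℕ) : Set (Pn n) :=
  {p | ∃ v : Vec n, ∃ hv : v ≠ 0, p = Projectivization.mk ℂ v hv ∧ herm n v v = 0}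

abbrev GLn (n : ℕ) := Matrix.GeneralLinearGroup (Fin (n + 1)) ℂ
abbrev PGLn (n : ℕ) := GLn n ⧸ Subgroup.center (GLn n)

lemma glInj {n : ℕ} (A : GLn n) : Function.Injective (Matrix.mulVecLin (A : Mat n)) := by
  intro x y h
  simp only [Matrix.mulVecLin_apply] at h
  have h2 : ((A⁻¹ : GLn n) : Mat n) *ᵥ ((A : Mat n) *ᵥ x)
      = ((A⁻¹ : GLn n) : Mat n) *ᵥ ((A : Mat n) *ᵥ y) := by rw [h]
  rwa [Matrix.mulVec_mulVec, Matrix.mulVec_mulVec, Units.inv_mul, Matrix.one_mulVec,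
    Matrix.one_mulVec] at h2

def actGL {n : ℕ} (A : GLn n) : Pn n → Pn n :=
  Projectivization.map (Matrix.mulVecLin (A : Mat n)) (glInj A)

def act {n : ℕ} (g : PGLn n) : Pn n → Pn n := actGL (Quotient.out g)

-- part 2 --

/-- The subset `U(1,n)` of `GL(n+1,ℂ)`: matrices preserving the Hermitian form. -/
def unitaryGL (n : ℕ) : Set (GLn n) :=
  {A | ∀ u v : Vec n, herm n ((A : Mat n) *ᵥ u) ((A : Mat n) *ᵥ v) = herm n u v}

/-- `PU(1,n)`, the image of `U(1,n)` in `PGL(n+1,ℂ)`. -/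
def PUset (n : ℕ) : Set (PGLn n) := (QuotientGroup.mk : GLn n → PGLn n) '' unitaryGL n

/-- The center of the ball `𝐇ⁿ_ℂ`, namely the image of `(1,0,…,0)`. -/
def basePt (n : ℕ) : Pn n :=
  Projectivization.mk ℂ (Pi.single 0 1) (by
    intro h
    have := congrFun h 0
    simp [Pi.single_eq_same] at this)

lemma basePt_mem_Hball (n : ℕ) : basePt n ∈ Hball n := by
  refine ⟨Pi.single 0 1, _, rfl, ?_⟩
  have : herm n (Pi.single 0 1) (Pi.single 0 1) = -1 := by
    simp [herm, Pi.single_eq_same, Pi.single_eq_of_ne (Fin.succ_ne_zero _)]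
  rw [this]
  norm_num

/-- The set of accumulation points of the orbit `G • x` in `ℙⁿ_ℂ`: limits of
`g_m • x` along sequences of pairwise distinct elements of `G`. -/
def accPts {n : ℕ} (G : Subgroup (PGLn n)) (x : Pn n) : Set (Pn n) :=
  {z | ∃ g : ℕ → G, Function.Injective g ∧
    Tendsto (fun m => act (g m : PGLn n) x) atTop (𝓝 z)}

/-- The Chen–Greenberg limit set of `G`. -/
def LambdaCG {n : ℕ} (G : Subgroup (PGLn n)) : Set (Pn n) := accPts G (basePt n)

/-- Uniform convergence on `K` of a sequence of self-maps of `ℙⁿ_ℂ` to `F`, expressed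
via open neighborhoods of the diagonal.  Since `ℙⁿ_ℂ` is compact Hausdorff, this is
equivalent to uniform convergence on `K` with respect to any metric inducing its
topology. -/
def UnifConvOn {n : ℕ} (f : ℕ → Pn n → Pn n) (F : Pn n → Pn n) (K : Set (Pn n)) : Prop :=
  ∀ W : Set (Pn n × Pn n), IsOpen W → (∀ y, (y, y) ∈ W) →
    ∀ᶠ m in atTop, ∀ x ∈ K, (F x, f m x) ∈ W

/-- Uniform convergence on all compact subsets of `S`. -/
def UnifConvOnCompacts {n : ℕ} (f : ℕ → Pn n → Pn n) (F : Pn n → Pn n)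
    (S : Set (Pn n)) : Prop :=
  ∀ K ⊆ S, IsCompact K → UnifConvOn f F K

/-- The equicontinuity region of a subgroup `G ≤ PGL(n+1,ℂ)`: points having an open
neighborhood `U` on which every sequence in `G` has a subsequence converging uniformly
on compact subsets of `U`. -/
def eqRegion {n : ℕ} (G : Subgroup (PGLn n)) : Set (Pn n) :=
  {z | ∃ U : Set (Pn n), IsOpen U ∧ z ∈ U ∧
    ∀ g : ℕ → G, ∃ φ : ℕ → ℕ, StrictMono φ ∧ ∃ F : Pn n → Pn n,
      UnifConvOnCompacts (fun m => act (g (φ m) : PGLn n)) F U}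

/-- The equicontinuity region of the family of maps `{f m : m ∈ ℕ}`. -/
def eqRegionFam {n : ℕ} (f : ℕ → Pn n → Pn n) : Set (Pn n) :=
  {z | ∃ U : Set (Pn n), IsOpen U ∧ z ∈ U ∧
    ∀ s : ℕ → ℕ, ∃ φ : ℕ → ℕ, StrictMono φ ∧ ∃ F : Pn n → Pn n,
      UnifConvOnCompacts (fun k => f (s (φ k))) F U}

/-- The projectivization of a linear subspace `W ⊆ ℂ^{n+1}`, as a subset of `ℙⁿ_ℂ`. -/
def projSet {n : ℕ} (W : Submodule ℂ (Vec n)) : Set (Pn n) := {p | p.rep ∈ W}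

/-- A complex projective hyperplane: the projectivization of an `n`-dimensional
subspace of `ℂ^{n+1}`. -/
def IsProjHyperplane {n : ℕ} (S : Set (Pn n)) : Prop :=
  ∃ W : Submodule ℂ (Vec n), Module.finrank ℂ W = n ∧ S = projSet W

/-- A complex projective line: the projectivization of a `2`-dimensional subspace. -/
def IsProjLine {n : ℕ} (S : Set (Pn n)) : Prop :=
  ∃ W : Submodule ℂ (Vec n), Module.finrank ℂ W = 2 ∧ S = projSet W

/-- The kernel in `ℙⁿ_ℂ` of the quasi-projective map induced by the nonzero matrix `M`. -/
def qKer {n : ℕ} (M : Mat n) : Set (Pn n) := projSet (LinearMap.ker (Matrix.mulVecLin M))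

/-- The image in `ℙⁿ_ℂ` of the quasi-projective map induced by the nonzero matrix `M`. -/
def qIm {n : ℕ} (M : Mat n) : Set (Pn n) := projSet (LinearMap.range (Matrix.mulVecLin M))

/-- The quasi-projective map `ℙⁿ_ℂ ∖ Ker(M) → ℙⁿ_ℂ` induced by the nonzero matrix `M`
(extended to all of `ℙⁿ_ℂ` by the identity on `Ker(M)`, where it is irrelevant). -/
def qMap {n : ℕ} (M : Mat n) : Pn n → Pn n := fun p =>
  if h : M *ᵥ p.rep ≠ 0 then Projectivization.mk ℂ (M *ᵥ p.rep) h else p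

/-- Convergence of a sequence of transformations of `ℙⁿ_ℂ` to the quasi-projective map
induced by `M`, in the sense of quasi-projective transformations: uniform convergence
on compact subsets of `ℙⁿ_ℂ ∖ Ker(M)`. -/
def QPConv {n : ℕ} (f : ℕ → Pn n → Pn n) (M : Mat n) : Prop :=
  UnifConvOnCompacts f (qMap M) (qKer M)ᶜ

/-- The special linear group `SL(n+1,ℂ)`. -/
abbrev SLn (n : ℕ) := Matrix.SpecialLinearGroup (Fin (n + 1)) ℂ

/-- The projective special linear group `PSL(n+1,ℂ) = SL(n+1,ℂ)/center`. -/
abbrev PSLn (n : ℕ) := SLn n ⧸ Subgroup.center (SLn n)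

/-- The projective transformation induced by an element of `SL(n+1,ℂ)`. -/
def actSL {n : ℕ} (A : SLn n) : Pn n → Pn n := actGL (Matrix.SpecialLinearGroup.toGL A)

/-- The projective transformation induced by an element of `PSL(n+1,ℂ)` (via an
arbitrary representative; all representatives induce the same transformation). -/
def actPSL {n : ℕ} (g : PSLn n) : Pn n → Pn n := actSL (Quotient.out g)

/-- The projective hyperplane tangent to `∂𝐇ⁿ_ℂ` at `p`: the projectivization of the
Hermitian orthogonal complement of a lift of `p`. -/
def tangentAt {n : ℕ} (p : Pn n) : Set (Pn n) := {q | herm n q.rep p.rep = 0}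

end

/-!
Lift `γ_m` to matrices `A_m ∈ U(1,n)`. Discreteness of `G` forces `‖A_m‖ → ∞`, so along a
subsequence `A_m / ‖A_m‖ → B ≠ 0` and, as `A_m⁻¹ = J A_mᴴ J` for `J = diag(-1,1,…,1)`, also
`A_m⁻¹ / ‖A_m‖ → B♯ := J Bᴴ J`. Both limits have totally isotropic range; hence `B♯` has rank
one, spanned by the isotropic vector `w = B♯ e₀`, and `ker B = w^⊥`. Testing the uniform
convergence along points `[x + t_k u] → [x]` with `x ∈ ker B`, chosen so that their images stay in
a fixed hyperplane, gives `ker B ⊆ ker M`; so `ker M = w^⊥` and `Ker(γ) ∩ ∂𝐇ⁿ_ℂ = {[w]}`.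
Finally `γ_m⁻¹ · [e₀] = [A_m⁻¹ e₀] → [w]`, so `[w] ∈ Λ_CG(G)`.
-/

open scoped ComplexOrder

section ProjectiveSpace

variable {n : ℕ}

noncomputable def projector (v : Vec n) : Mat n := (star v ⬝ᵥ v)⁻¹ • vecMulVec v (star v)

lemma projector_mulVec (v u : Vec n) :
    projector v *ᵥ u = ((star v ⬝ᵥ v)⁻¹ * (star v ⬝ᵥ u)) • v := by
  simp [projector, Matrix.smul_mulVec, vecMulVec_mulVec, smul_smul]

lemma projector_smul {c : ℂ} (hc : c ≠ 0) (v : Vec n) : projector (c • v) = projector v := by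
  have : star c ≠ 0 := star_ne_zero.2 hc
  simp only [projector, star_smul, smul_dotProduct, dotProduct_smul, smul_vecMulVec,
    vecMulVec_smul, smul_smul, smul_eq_mul]
  congr 1
  field_simp

lemma projector_injective {u v : Vec n} (hu : u ≠ 0) (hv : v ≠ 0)
    (h : projector u = projector v) : Projectivization.mk ℂ u hu = Projectivization.mk ℂ v hv := by
  have hu' : star u ⬝ᵥ u ≠ 0 := dotProduct_star_self_eq_zero.not.2 hu
  have key : u = ((star v ⬝ᵥ v)⁻¹ * (star v ⬝ᵥ u)) • v := by
    rw [← projector_mulVec, ← h, projector_mulVec, inv_mul_cancel₀ hu', one_smul]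
  refine (Projectivization.mk_eq_mk_iff' ℂ _ _ hu hv).2 ⟨_, key.symm⟩

lemma continuous_projector : Continuous fun v : {v : Vec n // v ≠ 0} => projector v.1 := by
  have hv : Continuous fun v : {v : Vec n // v ≠ 0} => v.1 := continuous_subtype_val
  refine Continuous.smul (Continuous.inv₀ (hv.star.dotProduct hv) fun v => ?_)
    (Continuous.matrix_vecMulVec hv hv.star)
  exact dotProduct_star_self_eq_zero.not.2 v.2

instance : T2Space (Pn n) := by
  refine T2Space.of_injective_continuous (f := Projectivization.lift (fun v => projector v.1)
    fun a b t h => ?_) ?_ ?_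
  · have ht : t ≠ 0 := by rintro rfl; exact a.2 (by simpa using h)
    rw [h, projector_smul ht]
  · intro p q hpq
    induction p using Projectivization.ind with | h u hu => ?_
    induction q using Projectivization.ind with | h v hv => ?_
    exact projector_injective hu hv hpq
  · exact continuous_projector.quotient_lift _

lemma continuous_mk : Continuous fun v : {v : Vec n // v ≠ 0} => Projectivization.mk' ℂ v :=
  continuous_quotient_mk'

instance : CompactSpace (Pn n) := by
  have : CompactSpace (Metric.sphere (0 : Vec n) 1) :=
    isCompact_iff_compactSpace.1 (isCompact_sphere 0 1)
  refine Function.Surjective.compactSpace (f := fun v : Metric.sphere (0 : Vec n) 1 =>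
    Projectivization.mk ℂ v.1 (ne_zero_of_mem_unit_sphere v)) ?_ ?_
  · exact continuous_mk.comp (continuous_subtype_val.subtype_mk _)
  · intro p
    induction p using Projectivization.ind with | h v hv => ?_
    refine ⟨⟨((‖v‖⁻¹ : ℝ) : ℂ) • v, by simpa using norm_smul_inv_norm (𝕜 := ℂ) hv⟩, ?_⟩
    exact (Projectivization.mk_eq_mk_iff' ℂ _ _ _ hv).2 ⟨_, rfl⟩

lemma tendsto_mk_of_eventually {v : ℕ → Vec n} {x : Vec n} (hx : x ≠ 0)
    (hvx : Tendsto v atTop (𝓝 x)) {p : ℕ → Pn n}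
    (hp : ∀ᶠ k in atTop, ∀ hk : v k ≠ 0, p k = Projectivization.mk ℂ (v k) hk) :
    Tendsto p atTop (𝓝 (Projectivization.mk ℂ x hx)) := by
  set v' : ℕ → {v : Vec n // v ≠ 0} := fun k => if hk : v k = 0 then ⟨x, hx⟩ else ⟨v k, hk⟩
  have hv' : Tendsto v' atTop (𝓝 ⟨x, hx⟩) := by
    rw [tendsto_subtype_rng]
    refine hvx.congr' ?_
    filter_upwards [hvx.eventually_ne hx] with k hk
    simp [v', hk]
  refine ((continuous_mk.tendsto _).comp hv').congr' ?_
  filter_upwards [hp, hvx.eventually_ne hx] with k hpk hk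
  simp [v', hk, hpk hk, Projectivization.mk'_eq_mk]

lemma mk_mem_projSet_iff {W : Submodule ℂ (Vec n)} {v : Vec n} (hv : v ≠ 0) :
    Projectivization.mk ℂ v hv ∈ projSet W ↔ v ∈ W := by
  obtain ⟨a, ha⟩ := Projectivization.exists_smul_eq_mk_rep ℂ v hv
  change (Projectivization.mk ℂ v hv).rep ∈ W ↔ v ∈ W
  rw [← ha, Submodule.smul_mem_iff' W a]

lemma isClosed_projSet (W : Submodule ℂ (Vec n)) : IsClosed (projSet W) := by
  refine isQuotientMap_quotient_mk'.isClosed_preimage.1 ?_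
  convert W.closed_of_finiteDimensional.preimage (continuous_subtype_val (p := fun v => v ≠ 0))
    using 1
  ext ⟨v, hv⟩
  exact mk_mem_projSet_iff hv

lemma qMap_mk (M : Mat n) {v : Vec n} (hv : v ≠ 0) (hMv : M *ᵥ v ≠ 0) :
    qMap M (Projectivization.mk ℂ v hv) = Projectivization.mk ℂ (M *ᵥ v) hMv := by
  obtain ⟨a, ha⟩ := Projectivization.exists_smul_eq_mk_rep ℂ v hv
  have hrep : M *ᵥ (Projectivization.mk ℂ v hv).rep = (a : ℂ) • (M *ᵥ v) := by
    rw [← ha, Units.smul_def, Matrix.mulVec_smul]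
  have hne : M *ᵥ (Projectivization.mk ℂ v hv).rep ≠ 0 := by
    rw [hrep]; exact smul_ne_zero a.ne_zero hMv
  rw [qMap, dif_pos hne]
  exact (Projectivization.mk_eq_mk_iff' ℂ _ _ hne hMv).2 ⟨a, hrep.symm⟩

end ProjectiveSpace

section ProjectiveAction

variable {n : ℕ}

lemma GLn.mulVec_ne_zero (A : GLn n) {v : Vec n} (hv : v ≠ 0) : (A : Mat n) *ᵥ v ≠ 0 :=
  (map_ne_zero_iff _ (glInj A)).2 hv

lemma actGL_mk (A : GLn n) {v : Vec n} (hv : v ≠ 0) :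
    actGL A (Projectivization.mk ℂ v hv) =
      Projectivization.mk ℂ ((A : Mat n) *ᵥ v) (GLn.mulVec_ne_zero A hv) :=
  Projectivization.map_mk _ _ _ _

lemma act_mk (A : GLn n) : act (QuotientGroup.mk A : PGLn n) = actGL A := by
  obtain ⟨z, hz⟩ := QuotientGroup.mk_out_eq_mul (Subgroup.center (GLn n)) A
  obtain ⟨c, hc⟩ := GeneralLinearGroup.mem_center_iff_val_mem_range_scalar.1 z.2
  funext p
  induction p using Projectivization.ind with | h v hv => ?_
  rw [act, hz, actGL_mk, actGL_mk]
  refine (Projectivization.mk_eq_mk_iff' ℂ _ _ _ _).2 ⟨c, ?_⟩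
  rw [Units.val_mul, ← hc, scalar_apply, ← smul_one_eq_diagonal, Matrix.mul_smul, mul_one,
    smul_mulVec]

end ProjectiveAction

section UniformConvergence

variable {n : ℕ}

lemma UnifConvOn.tendsto_comp {f : ℕ → Pn n → Pn n} {F : Pn n → Pn n} {K : Set (Pn n)}
    (h : UnifConvOn f F K) {φ : ℕ → ℕ} (hφ : Tendsto φ atTop atTop) {p : ℕ → Pn n} {y : Pn n}
    (hpK : ∀ᶠ k in atTop, p k ∈ K) (hFp : Tendsto (fun k => F (p k)) atTop (𝓝 y)) :
    Tendsto (fun k => f (φ k) (p k)) atTop (𝓝 y) := by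
  rw [(nhds_basis_opens y).tendsto_right_iff]
  rintro V ⟨hyV, hVo⟩
  obtain ⟨C, hC, hCc, hCV⟩ := exists_mem_nhds_isClosed_subset (hVo.mem_nhds hyV)
  -- an open neighbourhood of the diagonal whose fibres over `C` lie in `V`
  have hW : IsOpen (V ×ˢ V ∪ Cᶜ ×ˢ Set.univ) :=
    (hVo.prod hVo).union (hCc.isOpen_compl.prod isOpen_univ)
  have hdiag (z : Pn n) : (z, z) ∈ V ×ˢ V ∪ Cᶜ ×ˢ Set.univ := by
    by_cases hz : z ∈ C
    exacts [Or.inl ⟨hCV hz, hCV hz⟩, Or.inr ⟨hz, trivial⟩]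
  filter_upwards [hφ.eventually (h _ hW hdiag), hpK, hFp hC] with k hk hpk hFk
  rcases hk (p k) hpk with hV | hCk
  exacts [hV.2, absurd hFk hCk.1]

lemma QPConv.tendsto_apply_mk {f : ℕ → Pn n → Pn n} {M : Mat n} (h : QPConv f M) {φ : ℕ → ℕ}
    (hφ : Tendsto φ atTop atTop) {v : ℕ → Vec n} {x : Vec n} (hv : ∀ k, v k ≠ 0)
    (hvx : Tendsto v atTop (𝓝 x)) (hMx : M *ᵥ x ≠ 0) :
    Tendsto (fun k => f (φ k) (Projectivization.mk ℂ (v k) (hv k))) atTop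
      (𝓝 (Projectivization.mk ℂ (M *ᵥ x) hMx)) := by
  have hx : x ≠ 0 := by rintro rfl; exact hMx (mulVec_zero M)
  have hxK : Projectivization.mk ℂ x hx ∈ (qKer M)ᶜ := (mk_mem_projSet_iff hx).not.2 hMx
  obtain ⟨K, hK, hKc, hKsub⟩ :=
    exists_mem_nhds_isClosed_subset ((isClosed_projSet _).isOpen_compl.mem_nhds hxK)
  have hunif : UnifConvOn f (qMap M) K := h K hKsub hKc.isCompact
  have hMv : Tendsto (fun k => M *ᵥ v k) atTop (𝓝 (M *ᵥ x)) :=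
    ((continuous_const.matrix_mulVec continuous_id).tendsto x).comp hvx
  refine hunif.tendsto_comp hφ ?_ ?_
  · exact tendsto_mk_of_eventually hx hvx (.of_forall fun k _ => rfl) hK
  · exact tendsto_mk_of_eventually hMx hMv (.of_forall fun k hk => qMap_mk M (hv k) hk)

lemma QPConv.apply_eq_zero_of_mulVec_eq_zero {A : ℕ → GLn n} {M B : Mat n}
    (hconv : QPConv (fun m => actGL (A m)) M) {φ : ℕ → ℕ} (hφ : Tendsto φ atTop atTop)
    {c : ℕ → ℂ} (hc : ∀ k, c k ≠ 0)
    (hB : Tendsto (fun k => c k • (A (φ k) : Mat n)) atTop (𝓝 B))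
    (ℓ : Module.Dual ℂ (Vec n)) {x u : Vec n} (hBx : B *ᵥ x = 0) (hBu : ℓ (B *ᵥ u) ≠ 0)
    (hMx : M *ᵥ x ≠ 0) : ℓ (M *ᵥ x) = 0 := by
  set Bk : ℕ → Mat n := fun k => c k • (A (φ k) : Mat n)
  have lim (y : Vec n) : Tendsto (fun k => ℓ (Bk k *ᵥ y)) atTop (𝓝 (ℓ (B *ᵥ y))) :=
    (((LinearMap.continuous_of_finiteDimensional ℓ).comp
      (continuous_id.matrix_mulVec continuous_const)).tendsto B).comp hB
  -- move `x` along `u` so that its images stay in the hyperplane `ℓ = 0`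
  set t : ℕ → ℂ := fun k => -ℓ (Bk k *ᵥ x) / ℓ (Bk k *ᵥ u)
  have ht : Tendsto t atTop (𝓝 0) := by
    have := (lim x).neg.div (lim u) hBu
    rwa [hBx, map_zero, neg_zero, zero_div] at this
  set v : ℕ → Vec n := fun k => x + t k • u
  have hvx : Tendsto v atTop (𝓝 x) := by
    simpa using tendsto_const_nhds.add (ht.smul_const u)
  have hv (k : ℕ) : v k ≠ 0 := by
    intro h0
    have hBu0 : B *ᵥ u ≠ 0 := fun h => hBu (by rw [h, map_zero])
    have htk : t k = 0 := by
      simpa [v, hBu0, hBx, mulVec_add, mulVec_smul] using congrArg (B *ᵥ ·) h0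
    exact hMx (by simpa [v, htk] using congrArg (M *ᵥ ·) h0)
  have hmem : ∀ᶠ k in atTop,
      actGL (A (φ k)) (Projectivization.mk ℂ (v k) (hv k)) ∈ projSet (LinearMap.ker ℓ) := by
    filter_upwards [(lim u).eventually_ne hBu] with k hk
    rw [actGL_mk, mk_mem_projSet_iff, LinearMap.mem_ker]
    have : c k * ℓ ((A (φ k) : Mat n) *ᵥ v k) = 0 := by
      simp only [Bk, smul_mulVec, map_smul, smul_eq_mul] at hk
      have hck := hc k
      have hAu := right_ne_zero_of_mul hk
      simp only [v, t, Bk, mulVec_add, mulVec_smul, smul_mulVec, map_add, map_smul, smul_eq_mul]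
      field_simp
      ring
    exact (mul_eq_zero.1 this).resolve_left (hc k)
  exact (mk_mem_projSet_iff hMx).1
    ((isClosed_projSet _).mem_of_tendsto (hconv.tendsto_apply_mk hφ hv hvx hMx) hmem)

lemma QPConv.mulVec_eq_zero_of_mulVec_eq_zero {A : ℕ → GLn n} {M B : Mat n}
    (hconv : QPConv (fun m => actGL (A m)) M) {φ : ℕ → ℕ} (hφ : Tendsto φ atTop atTop)
    {c : ℕ → ℂ} (hc : ∀ k, c k ≠ 0)
    (hB : Tendsto (fun k => c k • (A (φ k) : Mat n)) atTop (𝓝 B)) (hB0 : B ≠ 0) {x : Vec n}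
    (hBx : B *ᵥ x = 0) : M *ᵥ x = 0 := by
  by_contra hMx
  obtain ⟨u, hu⟩ : ∃ u, B *ᵥ u ≠ 0 := by
    by_contra! h
    exact hB0 (ext_iff_mulVec.2 fun u => by rw [h u, zero_mulVec])
  obtain ⟨ℓ, hℓ⟩ := Module.exists_dual_forall_apply_ne_zero (K := ℂ) ![B *ᵥ u, M *ᵥ x]
    (by simp [Fin.forall_fin_two, hu, hMx])
  exact hℓ 1 (hconv.apply_eq_zero_of_mulVec_eq_zero hφ hc hB ℓ hBx (hℓ 0) hMx)

end UniformConvergence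

section HermitianForm

variable {n : ℕ}

noncomputable def hermMatrix (n : ℕ) : Mat n := diagonal fun i => if i = 0 then -1 else 1

lemma herm_eq_dotProduct (u v : Vec n) : herm n u v = star v ⬝ᵥ (hermMatrix n *ᵥ u) := by
  simp [herm, hermMatrix, dotProduct, mulVec_diagonal, Fin.sum_univ_succ, Fin.succ_ne_zero,
    mul_comm]

lemma hermMatrix_mul_self : hermMatrix n * hermMatrix n = 1 := by
  rw [hermMatrix, diagonal_mul_diagonal, ← diagonal_one]
  congr 1
  ext i
  split_ifs <;> norm_num

lemma conjTranspose_hermMatrix : (hermMatrix n)ᴴ = hermMatrix n := by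
  rw [hermMatrix, diagonal_conjTranspose]
  congr 1
  ext i
  by_cases h : i = 0 <;> simp [h]

lemma herm_smul_left (c : ℂ) (u v : Vec n) : herm n (c • u) v = c * herm n u v := by
  simp [herm_eq_dotProduct, mulVec_smul, dotProduct_smul]

lemma star_herm (u v : Vec n) : star (herm n u v) = herm n v u := by
  rw [herm_eq_dotProduct, herm_eq_dotProduct, star_dotProduct, star_star, star_mulVec,
    conjTranspose_hermMatrix, dotProduct_mulVec]

lemma herm_smul_right (c : ℂ) (u v : Vec n) : herm n u (c • v) = star c * herm n u v := by
  rw [← star_herm, herm_smul_left, star_mul', star_herm]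

lemma herm_sub_left (u u' v : Vec n) : herm n (u - u') v = herm n u v - herm n u' v := by
  simp [herm_eq_dotProduct, mulVec_sub, dotProduct_sub]

lemma herm_sub_right (u v v' : Vec n) : herm n u (v - v') = herm n u v - herm n u v' := by
  simp [herm_eq_dotProduct, star_sub, sub_dotProduct]

lemma herm_single_zero_left (v : Vec n) : herm n (Pi.single 0 1) v = -star (v 0) := by
  simp [herm, Fin.succ_ne_zero]

lemma herm_zero_left (v : Vec n) : herm n 0 v = 0 := by
  simpa using herm_smul_left 0 0 v

lemma Continuous.herm {α : Type*} [TopologicalSpace α] {f g : α → Vec n} (hf : Continuous f)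
    (hg : Continuous g) : Continuous fun a => herm n (f a) (g a) := by
  simp only [herm_eq_dotProduct]
  exact hg.star.dotProduct (continuous_const.matrix_mulVec hf)

lemma eq_zero_of_forall_herm_eq_zero {v : Vec n} (h : ∀ u, herm n u v = 0) : v = 0 := by
  have := h (hermMatrix n *ᵥ v)
  rwa [herm_eq_dotProduct, mulVec_mulVec, hermMatrix_mul_self, one_mulVec,
    dotProduct_star_self_eq_zero] at this

lemma eq_zero_of_herm_self_eq_zero {v : Vec n} (h0 : v 0 = 0) (h : herm n v v = 0) : v = 0 := by
  have htail : star (fun j : Fin n => v j.succ) ⬝ᵥ (fun j => v j.succ) = 0 := by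
    simpa [herm, h0, dotProduct, mul_comm] using h
  rw [dotProduct_star_self_eq_zero] at htail
  funext i
  cases i using Fin.cases with
  | zero => exact h0
  | succ j => exact congrFun htail j

-- `u 0 ≠ 0`, and `v - (v 0 / u 0) • u` is isotropic with vanishing `0`-th coordinate.
lemma exists_smul_eq_of_herm_eq_zero {u v : Vec n} (hu0 : u ≠ 0) (hu : herm n u u = 0)
    (hv : herm n v v = 0) (huv : herm n v u = 0) : ∃ c : ℂ, v = c • u := by
  have hu00 : u 0 ≠ 0 := fun h => hu0 (eq_zero_of_herm_self_eq_zero h hu)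
  refine ⟨v 0 / u 0, sub_eq_zero.1 (eq_zero_of_herm_self_eq_zero ?_ ?_)⟩
  · simp [hu00]
  · have hvu : herm n u v = 0 := by rw [← star_herm, huv, star_zero]
    rw [herm_sub_left, herm_sub_right, herm_sub_right, herm_smul_left, herm_smul_left,
      herm_smul_right, herm_smul_right, hu, hv, huv, hvu]
    ring

noncomputable def hermAdjoint (X : Mat n) : Mat n := hermMatrix n * Xᴴ * hermMatrix n

lemma herm_hermAdjoint_mulVec (X : Mat n) (u v : Vec n) :
    herm n (hermAdjoint X *ᵥ u) v = herm n u (X *ᵥ v) := by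
  rw [herm_eq_dotProduct, herm_eq_dotProduct, hermAdjoint, mulVec_mulVec, ← mul_assoc,
    ← mul_assoc, hermMatrix_mul_self, one_mul, ← mulVec_mulVec, dotProduct_mulVec,
    star_mulVec]

lemma continuous_hermAdjoint : Continuous (hermAdjoint (n := n)) :=
  (continuous_const.matrix_mul continuous_id.matrix_conjTranspose).matrix_mul continuous_const

lemma hermAdjoint_smul (c : ℂ) (X : Mat n) : hermAdjoint (c • X) = star c • hermAdjoint X := by
  simp [hermAdjoint, conjTranspose_smul]

end HermitianForm

section Unitary

variable {n : ℕ}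

lemma hermAdjoint_mul_of_mem_unitaryGL {A : GLn n} (hA : A ∈ unitaryGL n) :
    hermAdjoint (A : Mat n) * A = 1 := by
  refine ext_iff_mulVec.2 fun u => sub_eq_zero.1 (eq_zero_of_forall_herm_eq_zero fun w => ?_)
  rw [herm_sub_right, ← mulVec_mulVec, one_mulVec, ← star_herm, herm_hermAdjoint_mulVec, hA,
    star_herm, sub_self]

lemma coe_inv_of_mem_unitaryGL {A : GLn n} (hA : A ∈ unitaryGL n) :
    ((A⁻¹ : GLn n) : Mat n) = hermAdjoint (A : Mat n) :=
  Units.inv_eq_of_mul_eq_one_left (hermAdjoint_mul_of_mem_unitaryGL hA)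

lemma inv_mem_unitaryGL {A : GLn n} (hA : A ∈ unitaryGL n) : A⁻¹ ∈ unitaryGL n := fun u v => by
  have := hA (((A⁻¹ : GLn n) : Mat n) *ᵥ u) (((A⁻¹ : GLn n) : Mat n) *ᵥ v)
  rwa [mulVec_mulVec, mulVec_mulVec, ← Units.val_mul, mul_inv_cancel, Units.val_one,
    one_mulVec, one_mulVec, eq_comm] at this

lemma exists_tendsto_of_mem_unitaryGL {A : ℕ → GLn n} (hA : ∀ k, A k ∈ unitaryGL n) {L : Mat n}
    (hL : Tendsto (fun k => (A k : Mat n)) atTop (𝓝 L)) : ∃ U : GLn n, Tendsto A atTop (𝓝 U) := by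
  have hadj : Tendsto (fun k => hermAdjoint (A k : Mat n)) atTop (𝓝 (hermAdjoint L)) :=
    (continuous_hermAdjoint.tendsto L).comp hL
  have hinv : hermAdjoint L * L = 1 :=
    tendsto_nhds_unique ((hadj.mul hL).congr fun k => hermAdjoint_mul_of_mem_unitaryGL (hA k))
      tendsto_const_nhds
  refine ⟨⟨L, hermAdjoint L, mul_eq_one_comm.1 hinv, hinv⟩, ?_⟩
  rw [Units.isInducing_embedProduct.tendsto_nhds_iff]
  refine hL.prodMk_nhds (MulOpposite.continuous_op.tendsto _ |>.comp (hadj.congr fun k => ?_))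
  exact (coe_inv_of_mem_unitaryGL (hA k)).symm

end Unitary

lemma Subgroup.not_tendsto_of_injective {H : Type*} [Group H] [TopologicalSpace H]
    [IsTopologicalGroup H] {G : Subgroup H} [DiscreteTopology G] {g : ℕ → G}
    (hg : Function.Injective g) (h : H) : ¬Tendsto (fun k => (g k : H)) atTop (𝓝 h) := by
  intro hlim
  have hquot : Tendsto (fun k => g (k + 1) * (g k)⁻¹) atTop (𝓝 1) := by
    rw [tendsto_subtype_rng]
    simpa using (hlim.comp (tendsto_add_atTop_nat 1)).mul hlim.inv
  rw [nhds_discrete, tendsto_pure] at hquot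
  obtain ⟨k, hk⟩ := hquot.exists
  exact k.succ_ne_self (hg (mul_inv_eq_one.1 hk))

lemma exists_tendsto_inv_norm_smul {E : Type*} [NormedAddCommGroup E] [NormedSpace ℂ E]
    [ProperSpace E] (X : ℕ → E) (hX : ∀ k, X k ≠ 0) :
    ∃ φ : ℕ → ℕ, StrictMono φ ∧ ∃ B ≠ 0,
      Tendsto (fun k => ((‖X (φ k)‖⁻¹ : ℝ) : ℂ) • X (φ k)) atTop (𝓝 B) := by
  obtain ⟨B, hB, φ, hφ, hlim⟩ := (isCompact_sphere (0 : E) 1).tendsto_subseq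
    (x := fun k => ((‖X k‖⁻¹ : ℝ) : ℂ) • X k) fun k => by
      simpa using norm_smul_inv_norm (𝕜 := ℂ) (hX k)
  exact ⟨φ, hφ, B, ne_zero_of_mem_unit_sphere ⟨B, hB⟩, hlim⟩

section MatrixNorm

attribute [local instance] Matrix.normedAddCommGroup Matrix.normedSpace

variable {n : ℕ}

lemma tendsto_norm_atTop_of_injective {G : Subgroup (PGLn n)} [DiscreteTopology G] {γ : ℕ → G}
    (hγ : Function.Injective γ) {A : ℕ → GLn n} (hA : ∀ k, A k ∈ unitaryGL n)
    (hAγ : ∀ k, (QuotientGroup.mk (A k) : PGLn n) = γ k) :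
    Tendsto (fun k => ‖(A k : Mat n)‖) atTop atTop := by
  by_contra hlim
  obtain ⟨R, hR⟩ : ∃ R, ∃ᶠ k in atTop, ‖(A k : Mat n)‖ < R := by
    simpa [tendsto_atTop, not_forall, frequently_atTop] using hlim
  obtain ⟨ψ, hψ, hψR⟩ := extraction_of_frequently_atTop hR
  obtain ⟨L, -, θ, hθ, hL⟩ := tendsto_subseq_of_bounded (Metric.isBounded_ball (x := 0) (r := R))
    (x := fun k => (A (ψ k) : Mat n)) fun k => by simpa using hψR k
  obtain ⟨U, hU⟩ := exists_tendsto_of_mem_unitaryGL (fun k => hA (ψ (θ k))) hL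
  refine Subgroup.not_tendsto_of_injective (hγ.comp (hψ.comp hθ).injective) (QuotientGroup.mk U) ?_
  exact ((continuous_quotient_mk'.tendsto U).comp hU).congr fun k => hAγ _

lemma exists_tendsto_smul_of_injective {G : Subgroup (PGLn n)} [DiscreteTopology G]
    {γ : ℕ → G} (hγ : Function.Injective γ) {A : ℕ → GLn n} (hA : ∀ k, A k ∈ unitaryGL n)
    (hAγ : ∀ k, (QuotientGroup.mk (A k) : PGLn n) = γ k) :
    ∃ φ : ℕ → ℕ, StrictMono φ ∧ ∃ c : ℕ → ℂ, (∀ k, c k ≠ 0) ∧ Tendsto c atTop (𝓝 0) ∧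
      ∃ B ≠ 0, Tendsto (fun k => c k • (A (φ k) : Mat n)) atTop (𝓝 B) := by
  obtain ⟨φ, hφ, B, hB0, hB⟩ :=
    exists_tendsto_inv_norm_smul (fun k => (A k : Mat n)) fun k => (A k).ne_zero
  refine ⟨φ, hφ, _, fun k => by simp, ?_, B, hB0, hB⟩
  have hinv := (tendsto_norm_atTop_of_injective hγ hA hAγ).inv_tendsto_atTop.comp hφ.tendsto_atTop
  have := (Complex.continuous_ofReal.tendsto 0).comp hinv
  simpa [Function.comp_def] using this

end MatrixNorm

section NormalizedLimits

variable {n : ℕ}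

def IsotropicRange (X : Mat n) : Prop := ∀ u v, herm n (X *ᵥ u) (X *ᵥ v) = 0

lemma isotropicRange_of_tendsto {A : ℕ → GLn n} (hA : ∀ k, A k ∈ unitaryGL n) {c : ℕ → ℂ}
    (hc : Tendsto c atTop (𝓝 0)) {X : Mat n}
    (hX : Tendsto (fun k => c k • (A k : Mat n)) atTop (𝓝 X)) : IsotropicRange X := fun u v => by
  have hcont : Continuous fun Y : Mat n => herm n (Y *ᵥ u) (Y *ᵥ v) :=
    (continuous_id.matrix_mulVec continuous_const).herm
      (continuous_id.matrix_mulVec continuous_const)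
  refine tendsto_nhds_unique (((hcont.tendsto X).comp hX).congr fun k => ?_)
    (by simpa using (hc.mul hc.star).mul_const (herm n u v))
  simp only [Function.comp_apply, smul_mulVec, herm_smul_left, herm_smul_right, hA k u v]
  simp only [Complex.star_def]
  ring

lemma tendsto_smul_inv_of_mem_unitaryGL {A : ℕ → GLn n} (hA : ∀ k, A k ∈ unitaryGL n)
    {c : ℕ → ℂ} {B : Mat n} (hB : Tendsto (fun k => c k • (A k : Mat n)) atTop (𝓝 B)) :
    Tendsto (fun k => star (c k) • ((A k)⁻¹ : GLn n).val) atTop (𝓝 (hermAdjoint B)) :=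
  ((continuous_hermAdjoint.tendsto B).comp hB).congr fun k => by
    simp [hermAdjoint_smul, coe_inv_of_mem_unitaryGL (hA k)]

lemma IsotropicRange.hermAdjoint_mulVec_ne_zero {B : Mat n} (hB : IsotropicRange B)
    (hB0 : B ≠ 0) : hermAdjoint B *ᵥ Pi.single 0 1 ≠ 0 := by
  intro h
  refine hB0 (ext_iff_mulVec.2 fun y => ?_)
  have hy := herm_hermAdjoint_mulVec B (Pi.single 0 1) y
  rw [h, herm_zero_left, herm_single_zero_left, eq_comm, neg_eq_zero, star_eq_zero] at hy
  rw [zero_mulVec]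
  exact eq_zero_of_herm_self_eq_zero hy (hB y y)

lemma mulVec_eq_zero_iff_herm_eq_zero {B : Mat n} (hC : IsotropicRange (hermAdjoint B))
    {o : Vec n} (hw : hermAdjoint B *ᵥ o ≠ 0) (y : Vec n) :
    B *ᵥ y = 0 ↔ herm n y (hermAdjoint B *ᵥ o) = 0 := by
  constructor
  · intro hy
    rw [← star_herm, herm_hermAdjoint_mulVec, hy, ← star_herm, herm_zero_left, star_zero,
      star_zero]
  · intro hy
    refine eq_zero_of_forall_herm_eq_zero fun u => ?_
    obtain ⟨c, hc⟩ := exists_smul_eq_of_herm_eq_zero hw (hC o o) (hC u u) (hC u o)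
    rw [← herm_hermAdjoint_mulVec, hc, herm_smul_left, ← star_herm, hy, star_zero, mul_zero]

lemma mulVec_eq_zero_iff_of_ker_le {B M : Mat n} {w : Vec n}
    (hB : ∀ y, B *ᵥ y = 0 ↔ herm n y w = 0) (hle : ∀ y, B *ᵥ y = 0 → M *ᵥ y = 0) (hM : M ≠ 0)
    (y : Vec n) : M *ᵥ y = 0 ↔ herm n y w = 0 := by
  refine ⟨fun hy => ?_, fun hy => hle y ((hB y).2 hy)⟩
  by_contra hyw
  refine hM (ext_iff_mulVec.2 fun v => ?_)
  rw [zero_mulVec]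
  have hv := hle _ ((hB (v - (herm n v w / herm n y w) • y)).2 (by
    rw [herm_sub_left, herm_smul_left, div_mul_cancel₀ _ hyw, sub_self]))
  rwa [mulVec_sub, mulVec_smul, hy, smul_zero, sub_zero] at hv

lemma tendsto_actGL_inv_basePt {A : ℕ → GLn n} (hA : ∀ k, A k ∈ unitaryGL n)
    {c : ℕ → ℂ} (hc : ∀ k, c k ≠ 0) {B : Mat n}
    (hB : Tendsto (fun k => c k • (A k : Mat n)) atTop (𝓝 B))
    (hw : hermAdjoint B *ᵥ Pi.single 0 1 ≠ 0) :
    Tendsto (fun k => actGL (A k)⁻¹ (basePt n)) atTop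
      (𝓝 (Projectivization.mk ℂ (hermAdjoint B *ᵥ Pi.single 0 1) hw)) := by
  refine tendsto_mk_of_eventually hw
    (((continuous_id.matrix_mulVec continuous_const).tendsto _).comp
      (tendsto_smul_inv_of_mem_unitaryGL hA hB)) (.of_forall fun k hk => ?_)
  rw [basePt, actGL_mk]
  refine (Projectivization.mk_eq_mk_iff' ℂ _ _ _ _).2 ⟨(star (c k))⁻¹, ?_⟩
  simp only [Function.comp_apply, id, smul_mulVec, smul_smul]
  rw [inv_mul_cancel₀ (star_ne_zero.2 (hc k)), one_smul]

end NormalizedLimits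

section Boundary

variable {n : ℕ}

lemma mem_Hbdry_iff (p : Pn n) : p ∈ Hbdry n ↔ herm n p.rep p.rep = 0 := by
  refine ⟨?_, fun h => ⟨p.rep, p.rep_nonzero, p.mk_rep.symm, h⟩⟩
  rintro ⟨v, hv, rfl, h⟩
  obtain ⟨a, ha⟩ := Projectivization.exists_smul_eq_mk_rep ℂ v hv
  rw [← ha, Units.smul_def, herm_smul_left, herm_smul_right, h, mul_zero, mul_zero]

lemma mem_tangentAt_mk_iff {w : Vec n} (hw : w ≠ 0) (q : Pn n) :
    q ∈ tangentAt (Projectivization.mk ℂ w hw) ↔ herm n q.rep w = 0 := by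
  obtain ⟨a, ha⟩ := Projectivization.exists_smul_eq_mk_rep ℂ w hw
  change herm n q.rep (Projectivization.mk ℂ w hw).rep = 0 ↔ _
  rw [← ha, Units.smul_def, herm_smul_right, mul_eq_zero, star_eq_zero]
  simp

lemma tangentAt_inter_Hbdry {p : Pn n} (hp : p ∈ Hbdry n) : tangentAt p ∩ Hbdry n = {p} := by
  ext q
  constructor
  · rintro ⟨hq, hqb⟩
    obtain ⟨c, hc⟩ := exists_smul_eq_of_herm_eq_zero p.rep_nonzero ((mem_Hbdry_iff p).1 hp)
      ((mem_Hbdry_iff q).1 hqb) hq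
    rw [Set.mem_singleton_iff, ← q.mk_rep, ← p.mk_rep]
    exact (Projectivization.mk_eq_mk_iff' ℂ _ _ _ _).2 ⟨c, hc.symm⟩
  · intro hq
    rw [Set.mem_singleton_iff.1 hq]
    exact ⟨(mem_Hbdry_iff p).1 hp, hp⟩

lemma qKer_eq_tangentAt {M : Mat n} {w : Vec n} (hw : w ≠ 0)
    (hM : ∀ y, M *ᵥ y = 0 ↔ herm n y w = 0) :
    qKer M = tangentAt (Projectivization.mk ℂ w hw) := by
  ext q
  exact (hM q.rep).trans (mem_tangentAt_mk_iff hw q).symm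

end Boundary

theorem qp_limit_kernel_touches_limit_set_general
    (n : ℕ) (G : Subgroup (PGLn n))
    (hPU : (G : Set (PGLn n)) ⊆ PUset n) (hdisc : DiscreteTopology ↥G)
    (γ : ℕ → G) (hγ : Function.Injective γ) (M : Mat n) (hM : M ≠ 0)
    (hconv : QPConv (fun m => act (γ m : PGLn n)) M) :
    ∃ q : Pn n, qKer M ∩ Hbdry n = {q} ∧ q ∈ LambdaCG G := by
  choose A hA hAγ using fun m => hPU (γ m).2
  replace hconv : QPConv (fun m => actGL (A m)) M := by simpa only [← hAγ, act_mk] using hconv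
  obtain ⟨φ, hφ, c, hc, hc0, B, hB0, hB⟩ := exists_tendsto_smul_of_injective hγ hA hAγ
  have hAφ : ∀ k, A (φ k) ∈ unitaryGL n := fun k => hA (φ k)
  have hC : IsotropicRange (hermAdjoint B) :=
    isotropicRange_of_tendsto (fun k => inv_mem_unitaryGL (hAφ k)) (by simpa using hc0.star)
      (tendsto_smul_inv_of_mem_unitaryGL hAφ hB)
  have hw := (isotropicRange_of_tendsto hAφ hc0 hB).hermAdjoint_mulVec_ne_zero hB0
  have hker := mulVec_eq_zero_iff_of_ker_le (mulVec_eq_zero_iff_herm_eq_zero hC hw)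
    (fun _ => hconv.mulVec_eq_zero_of_mulVec_eq_zero hφ.tendsto_atTop hc hB hB0) hM
  refine ⟨Projectivization.mk ℂ _ hw, ?_, fun k => (γ (φ k))⁻¹,
    inv_injective.comp (hγ.comp hφ.injective), ?_⟩
  · rw [qKer_eq_tangentAt hw hker]
    exact tangentAt_inter_Hbdry ⟨_, hw, rfl, hC _ _⟩
  · refine (tendsto_actGL_inv_basePt hAφ hc hB hw).congr fun k => ?_
    simp [← hAγ, ← act_mk]

/-- If a sequence of pairwise distinct elements of a discrete subgroup
`G` of `PU(1,n)` converges as quasi-projective transformations to `γ`, then the unique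
point of `Ker(γ) ∩ ∂𝐇ⁿ_ℂ` belongs to the Chen–Greenberg limit set `Λ_CG(G)`. -/
theorem qp_limit_kernel_touches_limit_set
    (n : ℕ) (hn : 1 ≤ n) (G : Subgroup (PGLn n))
    (hPU : (G : Set (PGLn n)) ⊆ PUset n) (hdisc : DiscreteTopology ↥G)
    (γ : ℕ → G) (hγ : Function.Injective γ) (M : Mat n) (hM : M ≠ 0)
    (hconv : QPConv (fun m => act (γ m : PGLn n)) M) :
    ∃ q : Pn n, qKer M ∩ Hbdry n = {q} ∧ q ∈ LambdaCG G :=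
  qp_limit_kernel_touches_limit_set_general n G hPU hdisc γ hγ M hM hconv
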